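/- Let N ≥ 3 and take φ = 0 (the ordered one-dimensional XY model with Hamiltonian F_0). For every subset A ⊆ {1,…,N} of even cardinality, the configuration θ defined by θ_N = 0 and increments θ_{k+1} − θ_k = π if k ∈ A and 0 otherwise (k = 1,…,N−1, and consistently s_N = π if N ∈ A, else 0, since |A| is even) is a stationary point of F_0, with energy F_0(θ) = 2|A| and Hessian determinant det 𝓗(θ) = (−1)^{|A|} (N − 2|A|). -/

import Mathlib

open Real Filter

/-- The variable `s k = φ k + θ (k+1) - θ k` (indices cyclic mod `N`,
0-based; paper index `k` corresponds to `k-1` here, so `s_N` is `sVar` at `lastIdx`). -/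
noncomputable def sVar (N : ℕ) (hN : 0 < N) (φ θ : Fin N → ℝ) (k : Fin N) : ℝ :=
  φ k + θ ⟨((k : ℕ) + 1) % N, Nat.mod_lt _ hN⟩ - θ k

/-- The lattice Landau gauge functional / random phase XY Hamiltonian
`F_φ(θ) = Σ_k (1 - cos(φ_k + θ_{k+1} - θ_k))` with periodic boundary conditions. -/
noncomputable def Fxy (N : ℕ) (hN : 0 < N) (φ θ : Fin N → ℝ) : ℝ :=
  ∑ k : Fin N, (1 - Real.cos (sVar N hN φ θ k))

/-- The index of the fixed site (paper site `N`). -/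
def lastIdx (N : ℕ) (hN : 0 < N) : Fin N :=
  ⟨N - 1, Nat.sub_lt hN Nat.one_pos⟩

/-- `θ` is a stationary point of `F_φ` regarded as a function of the free
coordinates `θ_1, …, θ_{N-1}` (0-based: coordinates `k` with `k < N-1`),
with `θ` at `lastIdx` held fixed: all partial derivatives vanish. -/
noncomputable def IsStationaryPt (N : ℕ) (hN : 0 < N) (φ θ : Fin N → ℝ) : Prop :=
  ∀ k : Fin N, (k : ℕ) < N - 1 →
    deriv (fun t : ℝ => Fxy N hN φ (Function.update θ k t)) (θ k) = 0

/-- The `(N-1) × (N-1)` tridiagonal matrix with entries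
`δ_{ij}(c_{i-1} + c_i) - δ_{i-1,j} c_{i-1} - δ_{i+1,j} c_i`, where indices are
0-based (paper index `i` ↦ `i-1`) and `c_0 := c_N` (cyclic predecessor). -/
noncomputable def hessC (N : ℕ) (hN : 0 < N) (c : Fin N → ℝ) :
    Matrix (Fin (N - 1)) (Fin (N - 1)) ℝ :=
  Matrix.of fun i j =>
    (if i = j then
        c ⟨((i : ℕ) + (N - 1)) % N, Nat.mod_lt _ hN⟩ +
          c ⟨(i : ℕ), lt_of_lt_of_le i.isLt (Nat.sub_le N 1)⟩
      else 0)
    - (if (i : ℕ) = (j : ℕ) + 1 then c ⟨((i : ℕ) + (N - 1)) % N, Nat.mod_lt _ hN⟩ else 0)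
    - (if (j : ℕ) = (i : ℕ) + 1 then c ⟨(i : ℕ), lt_of_lt_of_le i.isLt (Nat.sub_le N 1)⟩ else 0)

/-- The Hessian of `F_φ` (with the last coordinate fixed) at a configuration `θ`. -/
noncomputable def hessAt (N : ℕ) (hN : 0 < N) (φ θ : Fin N → ℝ) :
    Matrix (Fin (N - 1)) (Fin (N - 1)) ℝ :=
  hessC N hN fun k => Real.cos (sVar N hN φ θ k)

/-- `F_φ` as a function of the free coordinates only: the coordinate at
`lastIdx` is overwritten by `0`. -/
noncomputable def FxyFixed (N : ℕ) (hN : 0 < N) (φ : Fin N → ℝ) (η : Fin N → ℝ) : ℝ :=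
  Fxy N hN φ (Function.update η (lastIdx N hN) 0)

/-- The value `σ = (Φ + 2πl - π Σ_{k=1}^{N-1} q_k) / (1 + Σ_{k=1}^{N-1} (-1)^{q_k})`. -/
noncomputable def sigmaVal (N : ℕ) (hN : 0 < N) (φ : Fin N → ℝ) (q : Fin N → ℕ) (l : ℤ) : ℝ :=
  ((∑ k, φ k) + 2 * Real.pi * (l : ℝ)
      - Real.pi * ∑ k ∈ Finset.univ.erase (lastIdx N hN), (q k : ℝ)) /
    (1 + ∑ k ∈ Finset.univ.erase (lastIdx N hN), (-1 : ℝ) ^ (q k))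

/-!
Every increment `s_k` of the configuration is `0` or `π` modulo `2π`: for the free sites this is
the hypothesis, and for the closing increment it follows because the increments around the cycle
sum to zero and `|A|` is even. Hence all `sin s_k` vanish, so `θ` is stationary, and
`cos s_k = ε_k` with `ε_k = -1` on `A` and `1` off it, which gives the energy. The Hessian is the
Laplacian of the cycle with edge weights `ε_k` grounded at one vertex, i.e. the Laplacian of a
path with both ends grounded; by the matrix-tree theorem its determinant is
`∑_k ∏_{j ≠ k} ε_j = (∏ ε) (∑ ε) = (-1)^|A| (N - 2|A|)`.
-/

open Finset

@[to_additive]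
lemma Fin.prod_univ_mk_add_mod {M : Type*} [CommMonoid M] (N : ℕ) (hN : 0 < N) (m : ℕ)
    (f : Fin N → M) :
    ∏ k : Fin N, f ⟨((k : ℕ) + m) % N, Nat.mod_lt _ hN⟩ = ∏ k, f k := by
  have : NeZero N := ⟨hN.ne'⟩
  have hrot : ∀ k : Fin N,
      (⟨((k : ℕ) + m) % N, Nat.mod_lt _ hN⟩ : Fin N) = k + Fin.ofNat N m :=
    fun k => Fin.ext (by simp [Fin.val_add])
  simp only [hrot]
  exact Equiv.prod_comp (Equiv.addRight (Fin.ofNat N m)) f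

section Increments

variable (N : ℕ) (hN : 0 < N) (φ θ : Fin N → ℝ)

lemma sum_sVar : ∑ k, sVar N hN φ θ k = ∑ k, φ k := by
  simp only [sVar, sum_sub_distrib, sum_add_distrib, Fin.sum_univ_mk_add_mod N hN 1 θ,
    add_sub_cancel_right]

lemma sVar_update (k j : Fin N) (t : ℝ) :
    sVar N hN φ (Function.update θ k t) j = sVar N hN φ θ j +
      ((if (⟨((j : ℕ) + 1) % N, Nat.mod_lt _ hN⟩ : Fin N) = k then 1 else 0) -
        (if j = k then 1 else 0)) * (t - θ k) := by
  have hupd : ∀ i, Function.update θ k t i = θ i + (if i = k then 1 else 0) * (t - θ k) := by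
    intro i
    rw [Function.update_apply]
    split_ifs <;> subst_vars <;> ring
  simp only [sVar, hupd]
  ring

lemma hasDerivAt_Fxy_update (k : Fin N) :
    HasDerivAt (fun t => Fxy N hN φ (Function.update θ k t))
      (∑ j : Fin N, ((if (⟨((j : ℕ) + 1) % N, Nat.mod_lt _ hN⟩ : Fin N) = k then 1 else 0) -
        (if j = k then 1 else 0)) * Real.sin (sVar N hN φ θ j)) (θ k) := by
  simp only [Fxy, sVar_update]
  have hterm : ∀ s c : ℝ,
      HasDerivAt (fun t => 1 - Real.cos (s + c * (t - θ k))) (c * Real.sin s) (θ k) := by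
    intro s c
    refine ((((hasDerivAt_id' (θ k)).sub_const (θ k)).const_mul c).const_add s).cos.const_sub 1
      |>.congr_deriv ?_
    simp [mul_comm]
  exact HasDerivAt.fun_sum fun j _ => hterm _ _

lemma isStationaryPt_of_sin_eq_zero
    (hsin : ∀ j, Real.sin (sVar N hN φ θ j) = 0) : IsStationaryPt N hN φ θ :=
  fun k _ => by simp [(hasDerivAt_Fxy_update N hN φ θ k).deriv, hsin]

end Increments

/-- The Laplacian of the path `0 — 1 — ⋯ — (n+1)` with weight `b v` on the edge `{v, v+1}`,
restricted to the `n` interior vertices (interior vertex `i` is path vertex `i+1`). -/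
noncomputable def pathLaplacian (n : ℕ) (b : ℕ → ℝ) : Matrix (Fin n) (Fin n) ℝ :=
  Matrix.of fun i j =>
    if (i : ℕ) = j then b i + b (i + 1)
    else if (i : ℕ) = j + 1 then -b i
    else if (j : ℕ) = i + 1 then -b j
    else 0

lemma pathLaplacian_submatrix_succ (n : ℕ) (b : ℕ → ℝ) :
    (pathLaplacian (n + 1) b).submatrix Fin.succ Fin.succ =
      pathLaplacian n (fun i => b (i + 1)) := by
  ext i j
  simp only [pathLaplacian, Matrix.submatrix_apply, Matrix.of_apply, Fin.val_succ, add_left_inj]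

lemma det_pathLaplacian_add_two (n : ℕ) (b : ℕ → ℝ) :
    (pathLaplacian (n + 2) b).det =
      (b 0 + b 1) * (pathLaplacian (n + 1) (fun i => b (i + 1))).det -
        b 1 ^ 2 * (pathLaplacian n (fun i => b (i + 2))).det := by
  set L := pathLaplacian (n + 2) b
  have hrow : ∀ j : Fin n, L 0 j.succ.succ = 0 := fun j => by
    simp [L, pathLaplacian]
  -- the minor of the entry `(0, 1)` has `-b 1` as the only nonzero entry of its first column
  have hminor : (L.submatrix Fin.succ (Fin.succ (0 : Fin (n + 1))).succAbove).det =
      -b 1 * (pathLaplacian n (fun i => b (i + 2))).det := by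
    rw [Matrix.det_succ_column_zero, Fin.sum_univ_succ,
      sum_eq_zero fun i _ => by simp [L, pathLaplacian]]
    have hsub : (L.submatrix Fin.succ (Fin.succ (0 : Fin (n + 1))).succAbove).submatrix
        (Fin.succAbove 0) Fin.succ = pathLaplacian n (fun i => b (i + 2)) := by
      ext i j
      simp [L, pathLaplacian]
    rw [hsub]
    simp [L, pathLaplacian]
  rw [Matrix.det_succ_row_zero, Fin.sum_univ_succ, Fin.sum_univ_succ,
    sum_eq_zero fun j _ => by rw [hrow j, mul_zero, zero_mul], Fin.succAbove_zero,
    pathLaplacian_submatrix_succ, hminor]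
  simp [L, pathLaplacian]
  ring

lemma sum_prod_succAbove_succ (m : ℕ) (b : ℕ → ℝ) :
    ∑ i : Fin (m + 2), ∏ j : Fin (m + 1), b (i.succAbove j) =
      ∏ j : Fin (m + 1), b (j + 1) +
        b 0 * ∑ i : Fin (m + 1), ∏ j : Fin m, b (i.succAbove j + 1) := by
  simp [Fin.sum_univ_succ (n := m + 1), Fin.prod_univ_succ (n := m), mul_sum]

/-- Matrix-tree theorem for the path: each spanning forest rooted at the two ends omits
exactly one edge. -/
theorem det_pathLaplacian : ∀ (n : ℕ) (b : ℕ → ℝ),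
    (pathLaplacian n b).det = ∑ i : Fin (n + 1), ∏ j : Fin n, b (i.succAbove j)
  | 0, b => by simp
  | 1, b => by simp [pathLaplacian, Fin.sum_univ_two, add_comm]
  | n + 2, b => by
    rw [det_pathLaplacian_add_two, det_pathLaplacian (n + 1), det_pathLaplacian n,
      sum_prod_succAbove_succ (n + 1) b, sum_prod_succAbove_succ n (fun i => b (i + 1)),
      Fin.prod_univ_succ (n := n + 1)]
    simp only [Fin.val_zero, Fin.val_succ, add_assoc, one_add_one_eq_two, zero_add]
    ring

lemma det_pathLaplacian_of_sq_eq_one (n : ℕ) (b : ℕ → ℝ) (hb : ∀ i, b i ^ 2 = 1) :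
    (pathLaplacian n b).det = (∏ i : Fin (n + 1), b i) * ∑ i : Fin (n + 1), b i := by
  rw [det_pathLaplacian, mul_sum]
  refine sum_congr rfl fun i _ => ?_
  rw [Fin.prod_univ_succAbove (fun j : Fin (n + 1) => b j) i]
  linear_combination (-∏ j : Fin n, b (i.succAbove j)) * hb i

/-- Grounding the cycle at its last vertex leaves a path whose `v`-th edge is edge `v - 1`
of the cycle, taken cyclically. -/
lemma hessC_eq_pathLaplacian (N : ℕ) (hN : 0 < N) (c : Fin N → ℝ) :
    hessC N hN c = pathLaplacian (N - 1) (fun v => c ⟨(v + (N - 1)) % N, Nat.mod_lt _ hN⟩) := by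
  have hpred : ∀ v (hv : v < N - 1),
      (⟨(v + 1 + (N - 1)) % N, Nat.mod_lt _ hN⟩ : Fin N) = ⟨v, by omega⟩ := fun v hv =>
    Fin.ext <| show (v + 1 + (N - 1)) % N = v by
      rw [show v + 1 + (N - 1) = v + N by omega, Nat.add_mod_right, Nat.mod_eq_of_lt (by omega)]
  ext i j
  simp only [hessC, pathLaplacian, Matrix.of_apply, Fin.ext_iff]
  have hi := i.isLt
  by_cases hij : (i : ℕ) = j
  · simp [hij, hpred j j.isLt]
  by_cases hji : (j : ℕ) = i + 1
  · simp [hji, hpred i hi, show (i : ℕ) ≠ i + 1 + 1 by omega]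
  by_cases hij' : (i : ℕ) = j + 1 <;> simp [hij, hji, hij', show (j : ℕ) ≠ j + 1 + 1 by omega]

lemma det_hessC_of_sq_eq_one (N : ℕ) (hN : 0 < N) (c : Fin N → ℝ) (hc : ∀ k, c k ^ 2 = 1) :
    (hessC N hN c).det = (∏ k, c k) * ∑ k, c k := by
  rw [hessC_eq_pathLaplacian, det_pathLaplacian_of_sq_eq_one _ _ fun _ => hc _,
    Fin.prod_univ_eq_prod_range (fun v => c ⟨(v + (N - 1)) % N, Nat.mod_lt _ hN⟩),
    Fin.sum_univ_eq_sum_range (fun v => c ⟨(v + (N - 1)) % N, Nat.mod_lt _ hN⟩),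
    Nat.sub_add_cancel hN, ← Fin.prod_univ_eq_prod_range, ← Fin.sum_univ_eq_sum_range,
    Fin.prod_univ_mk_add_mod N hN, Fin.sum_univ_mk_add_mod N hN]

lemma cos_ite_pi_add_two_pi_mul (p : Prop) [Decidable p] (m : ℤ) :
    Real.cos ((if p then π else 0) + 2 * π * m) = if p then -1 else 1 := by
  rw [mul_comm, Real.cos_add_int_mul_two_pi]
  split_ifs <;> simp

lemma sin_ite_pi_add_two_pi_mul (p : Prop) [Decidable p] (m : ℤ) :
    Real.sin ((if p then π else 0) + 2 * π * m) = 0 := by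
  rw [mul_comm, Real.sin_add_int_mul_two_pi]
  split_ifs <;> simp

lemma sVar_eq_ite_add_two_pi_mul (N : ℕ) (hN : 0 < N) (A : Finset (Fin N)) (hA : Even A.card)
    (θ : Fin N → ℝ)
    (hinc : ∀ k : Fin N, (k : ℕ) < N - 1 →
      θ ⟨((k : ℕ) + 1) % N, Nat.mod_lt _ hN⟩ - θ k = if k ∈ A then π else 0)
    (k : Fin N) :
    ∃ m : ℤ, sVar N hN (fun _ => 0) θ k = (if k ∈ A then π else 0) + 2 * π * m := by
  by_cases hk : (k : ℕ) < N - 1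
  · exact ⟨0, by simp [sVar, hinc k hk]⟩
  obtain rfl : k = lastIdx N hN := Fin.ext (by simp only [lastIdx]; omega)
  set a := lastIdx N hN
  have hfree : ∀ j ∈ univ.erase a, sVar N hN (fun _ => 0) θ j = if j ∈ A then π else 0 :=
    fun j hj => by
      have hja : (j : ℕ) ≠ N - 1 := fun h => (mem_erase.mp hj).1 (Fin.ext h)
      simp [sVar, hinc j (by omega)]
  have htotal := sum_sVar N hN (fun _ => 0) θ
  rw [← add_sum_erase _ _ (mem_univ a), sum_congr rfl hfree, sum_ite_mem, erase_inter,
    univ_inter, sum_const, nsmul_eq_mul, sum_const_zero] at htotal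
  have hcard : (#(A.erase a) : ℝ) = #A - if a ∈ A then 1 else 0 := by
    split_ifs with ha
    · rw [← card_erase_add_one ha]
      push_cast
      ring
    · rw [erase_eq_of_notMem ha]
      ring
  obtain ⟨d, hd⟩ := hA
  refine ⟨-d, ?_⟩
  rw [hcard, show (#A : ℝ) = d + d by exact_mod_cast hd] at htotal
  split_ifs at htotal ⊢ <;> push_cast <;> linarith

/-- for the ordered XY model (`φ = 0`) and any subset `A` of the
sites with even cardinality, the configuration with `θ_N = 0` and increments
`θ_{k+1} - θ_k = π` for `k ∈ A` and `0` otherwise (`k = 1, …, N-1`; consistently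
`s_N ≡ π` if `N ∈ A` and `s_N ≡ 0` otherwise, mod `2π`) is a stationary point of
`F_0` with energy `F_0(θ) = 2|A|` and Hessian determinant
`det 𝓗(θ) = (-1)^{|A|} (N - 2|A|)`. -/
theorem stmt14 (N : ℕ) (hN : 3 ≤ N) (A : Finset (Fin N)) (hA : Even A.card)
    (θ : Fin N → ℝ)
    (hinc : ∀ k : Fin N, (k : ℕ) < N - 1 →
      θ ⟨((k : ℕ) + 1) % N, Nat.mod_lt _ (by omega)⟩ - θ k = if k ∈ A then π else 0) :
    IsStationaryPt N (by omega) (fun _ => 0) θ ∧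
    (∃ m : ℤ, sVar N (by omega) (fun _ => 0) θ (lastIdx N (by omega)) =
      (if lastIdx N (by omega) ∈ A then π else 0) + 2 * π * m) ∧
    Fxy N (by omega) (fun _ => 0) θ = 2 * A.card ∧
    (hessAt N (by omega) (fun _ => 0) θ).det = (-1 : ℝ) ^ A.card * ((N : ℝ) - 2 * A.card) := by
  have hN0 : 0 < N := by omega
  choose m hm using sVar_eq_ite_add_two_pi_mul N hN0 A hA θ hinc
  have hcos : (fun k => Real.cos (sVar N hN0 (fun _ => 0) θ k)) =
      fun k => if k ∈ A then -1 else 1 :=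
    funext fun k => by rw [hm k, cos_ite_pi_add_two_pi_mul]
  have henergy : ∑ k : Fin N, (1 - if k ∈ A then (-1 : ℝ) else 1) = 2 * #A := by
    have hterm : ∀ k, (1 - if k ∈ A then (-1 : ℝ) else 1) = if k ∈ A then 2 else 0 :=
      fun k => by split_ifs <;> norm_num
    simp only [hterm, sum_ite_mem, univ_inter, sum_const, nsmul_eq_mul, mul_comm]
  refine ⟨isStationaryPt_of_sin_eq_zero N hN0 _ θ fun k => by
    rw [hm k, sin_ite_pi_add_two_pi_mul], ⟨m _, hm _⟩, ?_, ?_⟩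
  · rw [Fxy, ← henergy]
    exact sum_congr rfl fun k _ => by rw [← congrFun hcos k]
  · rw [hessAt, hcos, det_hessC_of_sq_eq_one N hN0 _ fun k => by split_ifs <;> norm_num,
      prod_ite_mem, univ_inter, prod_const, ← henergy, sum_sub_distrib]
    simp
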